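/- Let ν be a σ-finite measure on (0,∞) and f : (0,∞) → [0,∞) a measurable function. Define p_t(x) = (2πt)^{−1/2} e^{−x²/(2t)} for t > 0, x ∈ ℝ, and set μ_A(x) = ∫_0^∞ f(t) p_t(x) ν(dt) and μ_B(x) = ∫_0^∞ p_t(x) ν(dt) (values in [0,∞]). Then ∫_ℝ ( √(μ_A(x)) − √(μ_B(x)) )² dx ≤ ∫_0^∞ ( √(f(t)) − 1 )² ν(dt), both sides interpreted in [0,∞]. (Absolute continuity of the subordinators, in the sense of Sato's Hellinger-type criterion, implies the corresponding criterion for the Lévy densities of the subordinated Brownian motions.) -/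

import Mathlib

/-!
Write `μ_A(x) = ∫ (√f(t) √p_t(x))² ν(dt)` and `μ_B(x) = ∫ (√p_t(x))² ν(dt)`. For fixed `x`, the
reverse triangle inequality in `L²(ν)` bounds `(√μ_A(x) - √μ_B(x))²` by
`∫ (√f(t) √p_t(x) - √p_t(x))² ν(dt) = ∫ (√f(t) - 1)² p_t(x) ν(dt)`. Integrating in `x`, Tonelli
and `∫ p_t(x) dx = 1` give the claim.
-/

open MeasureTheory Real Set
open scoped ENNReal

noncomputable def heatKernel (t x : ℝ) : ℝ := (2 * π * t) ^ (-(1/2:ℝ)) * Real.exp (-x^2/(2*t))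

lemma heatKernel_eq_gaussianPDFReal {t : ℝ} (ht : 0 ≤ t) (x : ℝ) :
    heatKernel t x = ProbabilityTheory.gaussianPDFReal 0 t.toNNReal x := by
  rw [heatKernel, ProbabilityTheory.gaussianPDFReal_def, Real.coe_toNNReal t ht, Real.sqrt_eq_rpow,
    ← Real.rpow_neg (by positivity)]
  simp

lemma heatKernel_nonneg {t : ℝ} (ht : 0 ≤ t) (x : ℝ) : 0 ≤ heatKernel t x :=
  heatKernel_eq_gaussianPDFReal ht x ▸ ProbabilityTheory.gaussianPDFReal_nonneg _ _ _

lemma measurable_uncurry_heatKernel : Measurable (Function.uncurry heatKernel) := by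
  unfold heatKernel
  fun_prop

lemma lintegral_heatKernel {t : ℝ} (ht : 0 < t) : ∫⁻ x, ENNReal.ofReal (heatKernel t x) = 1 := by
  simp_rw [heatKernel_eq_gaussianPDFReal ht.le]
  exact ProbabilityTheory.lintegral_gaussianPDFReal_eq_one 0 (by simpa using ht)

section Hellinger

variable {α : Type*} [MeasurableSpace α]

lemma eLpNorm_two_eq_lintegral_sq (μ : Measure α) (g : α → ℝ) :
    eLpNorm g 2 μ = (∫⁻ x, ENNReal.ofReal (g x ^ 2) ∂μ) ^ (1/2 : ℝ) := by
  rw [eLpNorm_eq_lintegral_rpow_enorm_toReal two_ne_zero ENNReal.ofNat_ne_top]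
  congr 2 with x
  simp [Real.enorm_eq_ofReal_abs, ← ENNReal.ofReal_pow (abs_nonneg _)]

lemma eLpNorm_sqrt_two (μ : Measure α) (a : α → ℝ) :
    eLpNorm (fun x => √(a x)) 2 μ = (∫⁻ x, ENNReal.ofReal (a x) ∂μ) ^ (1/2 : ℝ) := by
  simp [eLpNorm_two_eq_lintegral_sq, Real.sq_sqrt']

lemma eLpNorm_tsub_eLpNorm_le {E : Type*} [NormedAddCommGroup E] {p : ℝ≥0∞} (hp : 1 ≤ p)
    {μ : Measure α} {f g : α → E} (hf : AEStronglyMeasurable f μ)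
    (hg : AEStronglyMeasurable g μ) :
    eLpNorm f p μ - eLpNorm g p μ ≤ eLpNorm (f - g) p μ := by
  rw [tsub_le_iff_right]
  simpa using eLpNorm_add_le (hf.sub hg) hg hp

theorem sq_sqrt_lintegral_sub_le (μ : Measure α) {a b : α → ℝ} (ha : Measurable a)
    (hb : Measurable b) :
    max ((∫⁻ x, ENNReal.ofReal (a x) ∂μ) ^ (1/2 : ℝ) - (∫⁻ x, ENNReal.ofReal (b x) ∂μ) ^ (1/2 : ℝ))
        ((∫⁻ x, ENNReal.ofReal (b x) ∂μ) ^ (1/2 : ℝ) -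
          (∫⁻ x, ENNReal.ofReal (a x) ∂μ) ^ (1/2 : ℝ)) ^ 2 ≤
      ∫⁻ x, ENNReal.ofReal ((√(a x) - √(b x)) ^ 2) ∂μ := by
  have hsa : AEStronglyMeasurable (fun x => √(a x)) μ := ha.sqrt.aestronglyMeasurable
  have hsb : AEStronglyMeasurable (fun x => √(b x)) μ := hb.sqrt.aestronglyMeasurable
  have hdist : max (eLpNorm (fun x => √(a x)) 2 μ - eLpNorm (fun x => √(b x)) 2 μ)
      (eLpNorm (fun x => √(b x)) 2 μ - eLpNorm (fun x => √(a x)) 2 μ) ≤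
        eLpNorm (fun x => √(a x) - √(b x)) 2 μ :=
    max_le (eLpNorm_tsub_eLpNorm_le one_le_two hsa hsb)
      ((eLpNorm_tsub_eLpNorm_le one_le_two hsb hsa).trans_eq (eLpNorm_sub_comm _ _ _ _))
  rw [← eLpNorm_sqrt_two μ a, ← eLpNorm_sqrt_two μ b]
  calc _ ≤ eLpNorm (fun x => √(a x) - √(b x)) 2 μ ^ 2 := pow_le_pow_left₀ zero_le hdist 2
    _ = _ := by
      rw [eLpNorm_two_eq_lintegral_sq, ← ENNReal.rpow_natCast, ← ENNReal.rpow_mul]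
      norm_num

end Hellinger

lemma sqrt_mul_sub_sqrt_sq {s p : ℝ} (hs : 0 ≤ s) (hp : 0 ≤ p) :
    (√(s * p) - √p) ^ 2 = (√s - 1) ^ 2 * p := by
  rw [Real.sqrt_mul hs, ← sub_one_mul, mul_pow, Real.sq_sqrt hp]

lemma lintegral_lintegral_mul_heatKernel (ν : Measure ℝ) [SFinite ν] {g : ℝ → ℝ}
    (hg : Measurable g) (hg0 : ∀ t, 0 ≤ g t) :
    ∫⁻ x, ∫⁻ t in Ioi 0, ENNReal.ofReal (g t * heatKernel t x) ∂ν =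
      ∫⁻ t in Ioi 0, ENNReal.ofReal (g t) ∂ν := by
  rw [lintegral_lintegral_swap]
  · refine setLIntegral_congr_fun measurableSet_Ioi fun t ht => ?_
    simp_rw [ENNReal.ofReal_mul (hg0 t)]
    rw [lintegral_const_mul' _ _ ENNReal.ofReal_ne_top, lintegral_heatKernel ht, mul_one]
  · exact (ENNReal.measurable_ofReal.comp ((hg.comp measurable_snd).mul
      (measurable_uncurry_heatKernel.comp measurable_swap))).aemeasurable

theorem hellinger_subordination_inequality (ν : Measure ℝ) [SigmaFinite ν]
    (f : ℝ → ℝ) (hf : Measurable f) (hf0 : ∀ t, 0 ≤ f t) :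
    (∫⁻ x : ℝ,
        (max ((∫⁻ t in Ioi (0:ℝ),
                ENNReal.ofReal (f t * ((2 * π * t) ^ (-(1/2:ℝ)) * Real.exp (-x^2/(2*t)))) ∂ν)
                ^ (1/2 : ℝ) -
              (∫⁻ t in Ioi (0:ℝ),
                ENNReal.ofReal ((2 * π * t) ^ (-(1/2:ℝ)) * Real.exp (-x^2/(2*t))) ∂ν)
                ^ (1/2 : ℝ))
            ((∫⁻ t in Ioi (0:ℝ),
                ENNReal.ofReal ((2 * π * t) ^ (-(1/2:ℝ)) * Real.exp (-x^2/(2*t))) ∂ν)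
                ^ (1/2 : ℝ) -
              (∫⁻ t in Ioi (0:ℝ),
                ENNReal.ofReal (f t * ((2 * π * t) ^ (-(1/2:ℝ)) * Real.exp (-x^2/(2*t)))) ∂ν)
                ^ (1/2 : ℝ))) ^ 2) ≤
      ∫⁻ t in Ioi (0:ℝ), ENNReal.ofReal ((Real.sqrt (f t) - 1)^2) ∂ν := by
  have hp : ∀ x, Measurable fun t => heatKernel t x := fun x =>
    measurable_uncurry_heatKernel.comp (measurable_id.prodMk measurable_const)
  calc _ ≤ ∫⁻ x, ∫⁻ t in Ioi 0, ENNReal.ofReal ((√(f t) - 1) ^ 2 * heatKernel t x) ∂ν :=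
        lintegral_mono fun x =>
          (sq_sqrt_lintegral_sub_le _ (a := fun t => f t * heatKernel t x) (hf.mul (hp x))
            (hp x)).trans_eq <| setLIntegral_congr_fun measurableSet_Ioi fun t ht => by
              rw [sqrt_mul_sub_sqrt_sq (hf0 t) (heatKernel_nonneg ht.out.le x)]
    _ = _ := lintegral_lintegral_mul_heatKernel ν ((hf.sqrt.sub_const 1).pow_const 2)
        fun t => sq_nonneg _
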